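/- arXiv:math/9912148 — 2 statements merged into one kernel-verified Lean document; each statement's English description precedes it below -/
import Mathlib

section
/- Let γ: ∅ = γ(0) ⊂ γ(1) ⊂ ... ⊂ γ(n) = Λ be any saturated chain of partitions. For each step define κ(γ(j−1), γ(j)) = t^{−(γ(j)'_{i_j} − 1)} ∏_{s∈R_j} (1 − q^{a_{γ(j)}(s)+1} t^{l_{γ(j)}(s)})/(1 − q^{a_{γ(j-1)}(s)+1} t^{l_{γ(j-1)}(s)}) ∏_{s∈C_j} (1 − q^{a_{γ(j)}(s)} t^{l_{γ(j)}(s)+1})/(1 − q^{a_{γ(j-1)}(s)} t^{l_{γ(j-1)}(s)+1}) and ψ'_j = ∏_{s∈C_j} (1 − q^{a_{γ(j)}(s)} t^{l_{γ(j)}(s)+1})(1 − q^{a_{γ(j-1)}(s)+1} t^{l_{γ(j-1)}(s)}) / [(1 − q^{a_{γ(j)}(s)+1} t^{l_{γ(j)}(s)})(1 − q^{a_{γ(j-1)}(s)} t^{l_{γ(j-1)}(s)+1})]. Then ∏_{j=1}^{n} ψ'_j / κ(γ(j−1), γ(j)) = (1−q)^n t^{n(Λ)} / ∏_{s∈Λ}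 (1 − q^{a_Λ(s)+1} t^{l_Λ(s)}), an identity in ℚ(q,t) depending only on the endpoint Λ and not on the chain. -/
/-!
Adding the cell `(r, c)` to `μ` changes the factor `1 - q^{a(s)+1} t^{l(s)}` only for the cells
`s` in row `r` and column `c`. In `ψ' / κ` the column factors `1 - q^{a(s)} t^{l(s)+1}` cancel,
and what is left is `t^r` times the ratio of exactly these changed factors, i.e.
`ψ' / κ = (1 - q) t^r c'_μ / c'_Λ` with `c'_λ = ∏_{s ∈ λ} (1 - q^{a(s)+1} t^{l(s)})`, the
factor `1 - q` coming from the new cell. Along a chain this telescopes, and the exponents `r_j`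
add up to `∑_{s ∈ Λ} row(s) = n(Λ)`.
-/

/-- The field ℚ(q,t) of rational functions in two variables. -/
abbrev QQt : Type := FractionRing (MvPolynomial (Fin 2) ℚ)

noncomputable def qv : QQt := algebraMap (MvPolynomial (Fin 2) ℚ) QQt (MvPolynomial.X 0)
noncomputable def tv : QQt := algebraMap (MvPolynomial (Fin 2) ℚ) QQt (MvPolynomial.X 1)

/-- Arm length: the number of cells of `μ` strictly east of the cell `s`. -/
def arm (μ : YoungDiagram) (s : ℕ × ℕ) : ℕ := μ.rowLen s.1 - (s.2 + 1)

/-- Leg length: the number of cells of `μ` strictly south of the cell `s`. -/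
def leg (μ : YoungDiagram) (s : ℕ × ℕ) : ℕ := μ.colLen s.2 - (s.1 + 1)

/-- The Macdonald Pieri coefficient `ψ'_{Λ/λ}(q,t)`, a product over the cells
of `λ` in the column `c` of the added cell. -/
noncomputable def psi' (μ Λ : YoungDiagram) (c : ℕ) : QQt :=
  ∏ s ∈ μ.cells.filter (fun s => s.2 = c),
    ((1 - qv ^ arm Λ s * tv ^ (leg Λ s + 1)) * (1 - qv ^ (arm μ s + 1) * tv ^ leg μ s)) /
      ((1 - qv ^ (arm Λ s + 1) * tv ^ leg Λ s) * (1 - qv ^ arm μ s * tv ^ (leg μ s + 1)))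

/-- The multiplicity `κ(λ,Λ)` of the Macdonald Bratteli diagram, where the cell
added to `λ` to obtain `Λ` is `(r, c)`. -/
noncomputable def kappa (μ Λ : YoungDiagram) (r c : ℕ) : QQt :=
  tv ^ (-((Λ.colLen c : ℤ) - 1)) *
    (∏ s ∈ μ.cells.filter (fun s => s.1 = r),
      (1 - qv ^ (arm Λ s + 1) * tv ^ leg Λ s) / (1 - qv ^ (arm μ s + 1) * tv ^ leg μ s)) *
    (∏ s ∈ μ.cells.filter (fun s => s.2 = c),
      (1 - qv ^ arm Λ s * tv ^ (leg Λ s + 1)) / (1 - qv ^ arm μ s * tv ^ (leg μ s + 1)))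

open YoungDiagram Finset

theorem one_sub_qv_pow_mul_tv_pow_ne_zero {i j : ℕ} (h : i + j ≠ 0) :
    (1 : QQt) - qv ^ i * tv ^ j ≠ 0 := by
  intro h0
  have hmono : (MvPolynomial.X 0 ^ i * MvPolynomial.X 1 ^ j : MvPolynomial (Fin 2) ℚ) = 1 := by
    apply IsFractionRing.injective (MvPolynomial (Fin 2) ℚ) QQt
    simp only [map_mul, map_pow, map_one]
    exact (sub_eq_zero.mp h0).symm
  -- evaluating the monomial at `q = t = 2` gives `2 ^ (i + j) = 1`
  have heval := congrArg (MvPolynomial.eval fun _ => (2 : ℚ)) hmono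
  simp only [map_mul, map_pow, MvPolynomial.eval_X, map_one, ← pow_add] at heval
  exact absurd heval (one_lt_pow₀ (by norm_num) h).ne'

theorem tv_ne_zero : tv ≠ 0 :=
  (IsFractionRing.injective (MvPolynomial (Fin 2) ℚ) QQt).ne (MvPolynomial.X_ne_zero 1)
    |>.trans_eq (map_zero _)

/-- The factor of `s` in Macdonald's `c_μ(q,t)`. -/
noncomputable def hookFactor (μ : YoungDiagram) (s : ℕ × ℕ) : QQt :=
  1 - qv ^ arm μ s * tv ^ (leg μ s + 1)

/-- The factor of `s` in Macdonald's `c'_μ(q,t)`. -/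
noncomputable def hookFactor' (μ : YoungDiagram) (s : ℕ × ℕ) : QQt :=
  1 - qv ^ (arm μ s + 1) * tv ^ leg μ s

theorem hookFactor_ne_zero (μ : YoungDiagram) (s : ℕ × ℕ) : hookFactor μ s ≠ 0 :=
  one_sub_qv_pow_mul_tv_pow_ne_zero (by omega)

theorem hookFactor'_ne_zero (μ : YoungDiagram) (s : ℕ × ℕ) : hookFactor' μ s ≠ 0 :=
  one_sub_qv_pow_mul_tv_pow_ne_zero (by omega)

theorem YoungDiagram.sum_mul_rowLen_eq_sum_fst (μ : YoungDiagram) :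
    ∑ i ∈ range (μ.colLen 0), i * μ.rowLen i = ∑ s ∈ μ.cells, s.1 := by
  have hrow : ∀ s ∈ μ.cells, s.1 ∈ range (μ.colLen 0) := fun s hs =>
    mem_range.mpr <| mem_iff_lt_colLen.mp <| μ.up_left_mem le_rfl (Nat.zero_le s.2) hs
  rw [← sum_fiberwise_of_maps_to hrow]
  refine sum_congr rfl fun i _ => ?_
  rw [sum_congr rfl fun s hs => (mem_filter.mp hs).2, sum_const, smul_eq_mul, mul_comm,
    rowLen_eq_card]
  rfl

section AddCell

variable {μ Λ : YoungDiagram} {r c : ℕ}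

theorem mem_of_cells_eq_insert (hins : Λ.cells = insert (r, c) μ.cells) : (r, c) ∈ Λ := by
  rw [← mem_cells, hins]; exact mem_insert_self _ _

variable (hnot : (r, c) ∉ μ.cells) (hins : Λ.cells = insert (r, c) μ.cells)
include hnot hins

theorem rowLen_of_cells_eq_insert (i : ℕ) :
    Λ.rowLen i = μ.rowLen i + if r = i then 1 else 0 := by
  rw [rowLen_eq_card, rowLen_eq_card, row, row, hins, filter_insert]
  split_ifs
  · exact card_insert_of_notMem fun h => hnot (mem_filter.mp h).1
  · rfl

theorem colLen_of_cells_eq_insert (j : ℕ) :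
    Λ.colLen j = μ.colLen j + if c = j then 1 else 0 := by
  rw [colLen_eq_card, colLen_eq_card, col, col, hins, filter_insert]
  split_ifs
  · exact card_insert_of_notMem fun h => hnot (mem_filter.mp h).1
  · rfl

theorem rowLen_eq_of_cells_eq_insert : μ.rowLen r = c := by
  have hlt := mem_iff_lt_rowLen.mp (mem_of_cells_eq_insert hins)
  have hge := mt mem_iff_lt_rowLen.mpr hnot
  rw [rowLen_of_cells_eq_insert hnot hins, if_pos rfl] at hlt
  omega

theorem colLen_eq_of_cells_eq_insert : μ.colLen c = r := by
  have hlt := mem_iff_lt_colLen.mp (mem_of_cells_eq_insert hins)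
  have hge := mt mem_iff_lt_colLen.mpr hnot
  rw [colLen_of_cells_eq_insert hnot hins, if_pos rfl] at hlt
  omega

theorem hookFactor'_of_cells_eq_insert_of_ne {s : ℕ × ℕ} (hr : s.1 ≠ r) (hc : s.2 ≠ c) :
    hookFactor' Λ s = hookFactor' μ s := by
  simp only [hookFactor', arm, leg, rowLen_of_cells_eq_insert hnot hins,
    colLen_of_cells_eq_insert hnot hins, if_neg hr.symm, if_neg hc.symm, add_zero]

theorem prod_hookFactor'_of_cells_eq_insert :
    ∏ s ∈ Λ.cells, hookFactor' Λ s = (1 - qv) * ∏ s ∈ μ.cells, hookFactor' Λ s := by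
  have harm : arm Λ (r, c) = 0 := by
    simp only [arm, rowLen_of_cells_eq_insert hnot hins, if_pos,
      rowLen_eq_of_cells_eq_insert hnot hins, Nat.sub_self]
  have hleg : leg Λ (r, c) = 0 := by
    simp only [leg, colLen_of_cells_eq_insert hnot hins, if_pos,
      colLen_eq_of_cells_eq_insert hnot hins, Nat.sub_self]
  rw [hins, prod_insert hnot, hookFactor', harm, hleg, zero_add, pow_one, pow_zero, mul_one]

theorem prod_hookFactor'_div_of_cells_eq_insert :
    ∏ s ∈ μ.cells, hookFactor' μ s / hookFactor' Λ s =
      (∏ s ∈ μ.row r, hookFactor' μ s / hookFactor' Λ s) *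
        ∏ s ∈ μ.col c, hookFactor' μ s / hookFactor' Λ s := by
  have hdisj : Disjoint (μ.row r) (μ.col c) := by
    refine disjoint_left.mpr fun s hr hc => hnot ?_
    obtain ⟨hs, rfl⟩ := mem_row_iff.mp hr
    obtain ⟨-, rfl⟩ := mem_col_iff.mp hc
    exact hs
  rw [← prod_union hdisj, row, col, ← filter_or]
  refine (prod_filter_of_ne fun s _ hs => ?_).symm
  by_contra! h
  rw [hookFactor'_of_cells_eq_insert_of_ne hnot hins h.1 h.2,
    div_self (hookFactor'_ne_zero μ s)] at hs
  exact hs rfl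

theorem psi'_div_kappa_of_cells_eq_insert :
    psi' μ Λ c / kappa μ Λ r c =
      (1 - qv) * tv ^ r * (∏ s ∈ μ.cells, hookFactor' μ s) / ∏ s ∈ Λ.cells, hookFactor' Λ s := by
  have hkappa : kappa μ Λ r c = (tv ^ r)⁻¹ * (∏ s ∈ μ.row r, hookFactor' Λ s / hookFactor' μ s) *
      ∏ s ∈ μ.col c, hookFactor Λ s / hookFactor μ s := by
    rw [kappa, colLen_of_cells_eq_insert hnot hins, if_pos rfl,
      colLen_eq_of_cells_eq_insert hnot hins]
    push_cast
    rw [add_sub_cancel_right, zpow_neg, zpow_natCast]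
    rfl
  have hcol : psi' μ Λ c / ∏ s ∈ μ.col c, hookFactor Λ s / hookFactor μ s =
      ∏ s ∈ μ.col c, hookFactor' μ s / hookFactor' Λ s := by
    rw [psi', ← col, ← prod_div_distrib]
    refine prod_congr rfl fun s _ => ?_
    change hookFactor Λ s * hookFactor' μ s / (hookFactor' Λ s * hookFactor μ s) /
      (hookFactor Λ s / hookFactor μ s) = _
    have := hookFactor_ne_zero Λ s
    have := hookFactor_ne_zero μ s
    have := hookFactor'_ne_zero Λ s
    field_simp
  have hrow : (∏ s ∈ μ.row r, hookFactor' Λ s / hookFactor' μ s)⁻¹ =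
      ∏ s ∈ μ.row r, hookFactor' μ s / hookFactor' Λ s := by
    rw [← prod_inv_distrib]; simp only [inv_div]
  have hΛ := prod_ne_zero_iff.mpr fun s (_ : s ∈ μ.cells) => hookFactor'_ne_zero Λ s
  have hq : (1 : QQt) - qv ≠ 0 := by
    simpa using one_sub_qv_pow_mul_tv_pow_ne_zero (i := 1) (j := 0) one_ne_zero
  calc psi' μ Λ c / kappa μ Λ r c
      = tv ^ r * (∏ s ∈ μ.row r, hookFactor' Λ s / hookFactor' μ s)⁻¹ *
          (psi' μ Λ c / ∏ s ∈ μ.col c, hookFactor Λ s / hookFactor μ s) := by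
        rw [hkappa]; field_simp
    _ = tv ^ r * ∏ s ∈ μ.cells, hookFactor' μ s / hookFactor' Λ s := by
        rw [hrow, hcol, prod_hookFactor'_div_of_cells_eq_insert hnot hins, mul_assoc]
    _ = _ := by
        rw [prod_hookFactor'_of_cells_eq_insert hnot hins, prod_div_distrib]
        field_simp

end AddCell

/-- Combinatorial exchangeability (Lemma 1 of the paper).  For any saturated
chain `∅ = γ(0) ⊂ γ(1) ⊂ ⋯ ⊂ γ(n) = Λ` of Young diagrams, where at step `j`
the cell `(r j, c j)` is added, the product
`∏_{j=1}^{n} ψ'_{γ(j)/γ(j-1)} / κ(γ(j-1), γ(j))` equals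
`(1−q)^n t^{n(Λ)} / ∏_{s∈Λ} (1 − q^{a_Λ(s)+1} t^{l_Λ(s)})`, an identity in
`ℚ(q,t)` depending only on the endpoint `Λ` and not on the chain.  Here
`n(Λ) = Σ_i (i−1)Λ_i` is written 0-based as `Σ i · rowLen i`. -/
theorem psi_over_kappa_path_independent
    (n : ℕ) (γ : ℕ → YoungDiagram) (r c : ℕ → ℕ)
    (h0 : γ 0 = ⊥)
    (hstep : ∀ j < n, (r j, c j) ∉ (γ j).cells ∧
      (γ (j + 1)).cells = insert (r j, c j) (γ j).cells) :
    ∏ j ∈ Finset.range n, psi' (γ j) (γ (j + 1)) (c j) / kappa (γ j) (γ (j + 1)) (r j) (c j)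
      = (1 - qv) ^ n * tv ^ (∑ i ∈ Finset.range ((γ n).colLen 0), i * (γ n).rowLen i) /
          ∏ s ∈ (γ n).cells, (1 - qv ^ (arm (γ n) s + 1) * tv ^ leg (γ n) s) := by
  induction n with
  | zero => simp [h0, sum_mul_rowLen_eq_sum_fst]
  | succ n ih =>
    obtain ⟨hnot, hins⟩ := hstep n n.lt_succ_self
    have ih := ih fun j hj => hstep j (Nat.lt_succ_of_lt hj)
    change _ = _ / ∏ s ∈ (γ n).cells, hookFactor' (γ n) s at ih
    change _ = _ / ∏ s ∈ (γ (n + 1)).cells, hookFactor' (γ (n + 1)) s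
    have hH := prod_ne_zero_iff.mpr fun s (_ : s ∈ (γ n).cells) => hookFactor'_ne_zero (γ n) s
    rw [prod_range_succ, ih, psi'_div_kappa_of_cells_eq_insert hnot hins,
      sum_mul_rowLen_eq_sum_fst, sum_mul_rowLen_eq_sum_fst, hins, sum_insert hnot]
    field_simp
    ring
end

section
/- Let 0 ≤ q < 1, 0 < t < 1, and let λ ⊂ Λ be partitions differing by one cell added in column i. Then κ(λ,Λ) = (1/t^{Λ'_i−1}) ∏_{s∈R} (1 − q^{a_Λ(s)+1} t^{l_Λ(s)})/(1 − q^{a_λ(s)+1} t^{l_λ(s)}) ∏_{s∈C} (1 − q^{a_Λ(s)} t^{l_Λ(s)+1})/(1 − q^{a_λ(s)} t^{l_λ(s)+1}) is a strictly positive real number; consequently dim(Λ) > 0 for every partition Λ in the associated Bratteli diagram. -/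
section Factors

variable {R : Type*} [CommRing R] [LinearOrder R] [IsStrictOrderedRing R] {x y : R}

lemma one_sub_pow_succ_mul_pow_pos (hx0 : 0 ≤ x) (hx1 : x < 1) (hy0 : 0 ≤ y) (hy1 : y ≤ 1)
    (a b : ℕ) : 0 < 1 - x ^ (a + 1) * y ^ b :=
  sub_pos.2 <| calc
    x ^ (a + 1) * y ^ b ≤ x ^ (a + 1) :=
        mul_le_of_le_one_right (pow_nonneg hx0 _) (pow_le_one₀ hy0 hy1)
    _ < 1 := pow_lt_one₀ hx0 hx1 a.succ_ne_zero

lemma one_sub_pow_mul_pow_succ_pos (hx0 : 0 ≤ x) (hx1 : x ≤ 1) (hy0 : 0 ≤ y) (hy1 : y < 1)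
    (a b : ℕ) : 0 < 1 - x ^ a * y ^ (b + 1) := by
  rw [mul_comm]
  exact one_sub_pow_succ_mul_pow_pos hy0 hy1 hx0 hx1 b a

end Factors

/-- The Macdonald multiplicity `κ(μ, Λ)` for `Λ = μ ∪ {(r, c)}`; the rows and columns are
`0`-based, so `Λ.colLen c` is the paper's `Λ'_i` for `i = c + 1`. -/
noncomputable def macdonaldKappa (q t : ℝ) (μ Λ : YoungDiagram) (r c : ℕ) : ℝ :=
  (1 / t ^ (Λ.colLen c - 1)) *
    (∏ s ∈ μ.cells.filter (fun s => s.1 = r),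
      (1 - q ^ (arm Λ s + 1) * t ^ leg Λ s) / (1 - q ^ (arm μ s + 1) * t ^ leg μ s)) *
    (∏ s ∈ μ.cells.filter (fun s => s.2 = c),
      (1 - q ^ arm Λ s * t ^ (leg Λ s + 1)) / (1 - q ^ arm μ s * t ^ (leg μ s + 1)))

lemma macdonaldKappa_pos {q t : ℝ} (hq0 : 0 ≤ q) (hq1 : q < 1) (ht0 : 0 < t) (ht1 : t < 1)
    (μ Λ : YoungDiagram) (r c : ℕ) : 0 < macdonaldKappa q t μ Λ r c := by
  have hrow : ∀ a l : ℕ, 0 < 1 - q ^ (a + 1) * t ^ l :=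
    one_sub_pow_succ_mul_pow_pos hq0 hq1 ht0.le ht1.le
  have hcol : ∀ a l : ℕ, 0 < 1 - q ^ a * t ^ (l + 1) :=
    one_sub_pow_mul_pow_succ_pos hq0 hq1.le ht0.le ht1
  refine mul_pos (mul_pos (one_div_pos.2 (pow_pos ht0 _)) ?_) ?_
  · exact Finset.prod_pos fun s _ => div_pos (hrow _ _) (hrow _ _)
  · exact Finset.prod_pos fun s _ => div_pos (hcol _ _) (hcol _ _)

lemma IsLowerSet.diff_singleton_of_maximal {α : Type*} [PartialOrder α] {s : Set α} {a : α}
    (hs : IsLowerSet s) (ha : Maximal (· ∈ s) a) : IsLowerSet (s \ {a}) := by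
  rintro b c hcb ⟨hb, hba⟩
  refine ⟨hs hcb hb, ?_⟩
  rintro rfl
  exact hba (ha.eq_of_le hb hcb).symm

namespace YoungDiagram

lemma exists_cells_eq_insert (Λ : YoungDiagram) (hΛ : Λ.cells.Nonempty) :
    ∃ μ : YoungDiagram, ∃ x ∉ μ.cells, Λ.cells = insert x μ.cells := by
  obtain ⟨x, hx⟩ := Λ.cells.exists_maximal hΛ
  have hlower : IsLowerSet (↑(Λ.cells.erase x) : Set (ℕ × ℕ)) := by
    rw [Finset.coe_erase]
    exact Λ.isLowerSet.diff_singleton_of_maximal hx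
  exact ⟨⟨Λ.cells.erase x, hlower⟩, x, Finset.notMem_erase x _,
    (Finset.insert_erase hx.prop).symm⟩

lemma exists_chain_from_bot (n : ℕ) (Λ : YoungDiagram) (hΛ : Λ.cells.card = n) :
    ∃ γ : ℕ → YoungDiagram, γ 0 = ⊥ ∧ (∀ j, n ≤ j → γ j = Λ) ∧
      ∀ j < n, ∃ x ∉ (γ j).cells, (γ (j + 1)).cells = insert x (γ j).cells := by
  induction n generalizing Λ with
  | zero =>
    have hbot : Λ = ⊥ := YoungDiagram.ext (by simpa using hΛ)
    exact ⟨fun _ => ⊥, rfl, fun _ _ => hbot.symm, fun j hj => absurd hj (Nat.not_lt_zero j)⟩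
  | succ n ih =>
    obtain ⟨μ, x, hx, hμΛ⟩ := Λ.exists_cells_eq_insert (Finset.card_pos.1 (by omega))
    have hμ : μ.cells.card = n := by
      rw [hμΛ, Finset.card_insert_of_notMem hx] at hΛ
      omega
    obtain ⟨γ, hγ0, hγμ, hγstep⟩ := ih μ hμ
    refine ⟨fun j => if j ≤ n then γ j else Λ, by simp [hγ0], fun j hj => ?_,
      fun j hj => ?_⟩
    · simp [show ¬j ≤ n by omega]
    · rcases Nat.lt_or_ge j n with hjn | hjn
      · simpa [hjn.le, Nat.succ_le_of_lt hjn] using hγstep j hjn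
      · obtain rfl : j = n := by omega
        exact ⟨x, by simpa [hγμ] using hx, by simpa [hγμ] using hμΛ⟩

end YoungDiagram

/-- Positivity of the Macdonald multiplicity and of the dimension function.
Let `0 ≤ q < 1` and `0 < t < 1`, and let `κf` be the multiplicity function of
the Macdonald Bratteli diagram: for `λ ⊂ Λ` differing by one cell added at
`(r,c)` (column `i = c+1` 1-based, `Λ'_i = Λ.colLen c`),
`κf λ Λ = (1/t^{Λ'_i−1}) ∏_{s∈R} (1−q^{a_Λ+1}t^{l_Λ})/(1−q^{a_λ+1}t^{l_λ})
 ∏_{s∈C} (1−q^{a_Λ}t^{l_Λ+1})/(1−q^{a_λ}t^{l_λ+1})`.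
Then `κf λ Λ > 0` for every such pair, and consequently
`dim(Λ) = Σ_{chains ∅→Λ} ∏ κf > 0` for every partition `Λ`, where the chains
of length `n = |Λ|` are encoded as a Finset `S` of functions `ℕ → YoungDiagram`
starting at `⊥`, adding one cell at each of the first `n` steps, and constant
equal to `Λ` from time `n` on. -/
theorem macdonald_multiplicity_pos_and_dim_pos
    (q t : ℝ) (hq0 : 0 ≤ q) (hq1 : q < 1) (ht0 : 0 < t) (ht1 : t < 1)
    (κf : YoungDiagram → YoungDiagram → ℝ)
    (hκf : ∀ (μ Λ : YoungDiagram) (r c : ℕ), (r, c) ∉ μ.cells →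
      Λ.cells = insert (r, c) μ.cells →
      κf μ Λ = (1 / t ^ (Λ.colLen c - 1)) *
        (∏ s ∈ μ.cells.filter (fun s => s.1 = r),
          (1 - q ^ (arm Λ s + 1) * t ^ leg Λ s) /
            (1 - q ^ (arm μ s + 1) * t ^ leg μ s)) *
        (∏ s ∈ μ.cells.filter (fun s => s.2 = c),
          (1 - q ^ arm Λ s * t ^ (leg Λ s + 1)) /
            (1 - q ^ arm μ s * t ^ (leg μ s + 1)))) :
    (∀ (μ Λ : YoungDiagram) (r c : ℕ), (r, c) ∉ μ.cells →
      Λ.cells = insert (r, c) μ.cells → 0 < κf μ Λ) ∧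
    (∀ (n : ℕ) (Λ : YoungDiagram), Λ.cells.card = n →
      ∀ S : Finset (ℕ → YoungDiagram),
      (∀ γ : ℕ → YoungDiagram, γ ∈ S ↔
        (γ 0 = ⊥ ∧ (∀ j, n ≤ j → γ j = Λ) ∧
          ∀ j < n, ∃ x, x ∉ (γ j).cells ∧ (γ (j + 1)).cells = insert x (γ j).cells)) →
      0 < ∑ γ ∈ S, ∏ j ∈ Finset.range n, κf (γ j) (γ (j + 1))) := by
  have hκ_pos : ∀ (μ Λ : YoungDiagram) (r c : ℕ), (r, c) ∉ μ.cells →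
      Λ.cells = insert (r, c) μ.cells → 0 < κf μ Λ := fun μ Λ r c hrc hΛ => by
    rw [hκf μ Λ r c hrc hΛ]
    exact macdonaldKappa_pos hq0 hq1 ht0 ht1 μ Λ r c
  refine ⟨hκ_pos, fun n Λ hcard S hS => ?_⟩
  obtain ⟨γ, hγ⟩ := YoungDiagram.exists_chain_from_bot n Λ hcard
  refine Finset.sum_pos (fun γ' hγ' => Finset.prod_pos fun j hj => ?_) ⟨γ, (hS γ).2 hγ⟩
  obtain ⟨⟨r, c⟩, hrc, hstep⟩ := ((hS γ').1 hγ').2.2 j (Finset.mem_range.1 hj)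
  exact hκ_pos _ _ r c hrc hstep
end
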